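/- arXiv:1108.3570 — 5 statements merged into one kernel-verified Lean document; each statement's English description precedes it below -/
import Mathlib

section
/- Let ε ∈ (0,1), c ∈ (0,1), and (γ_k) a sequence of nonnegative reals with γ_0 ≤ ρ for some ρ > 0, satisfying γ_{k+1} ≤ γ_k - c·γ_k^{2/(1+ε)} for all k. Then γ_k ≤ ( c·k·(1-ε)/(1+ε) + ρ^{-(1-ε)/(1+ε)} )^{-(1+ε)/(1-ε)} for all k ≥ 0. -/
theorem recursive_rate_sublinear (ε c ρ : ℝ) (γ : ℕ → ℝ)
    (hε : ε ∈ Set.Ioo (0:ℝ) 1) (hc : c ∈ Set.Ioo (0:ℝ) 1) (hρ : 0 < ρ)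
    (hnn : ∀ k, 0 ≤ γ k) (h0 : γ 0 ≤ ρ)
    (hsmall : ∀ k, c * (γ k) ^ ((1 - ε) / (1 + ε)) < 1)
    (hrec : ∀ k, γ (k + 1) ≤ γ k - c * (γ k) ^ (2 / (1 + ε))) :
    ∀ k : ℕ, γ k ≤
      (c * k * ((1 - ε) / (1 + ε)) + ρ ^ (-((1 - ε) / (1 + ε)))) ^
        (-((1 + ε) / (1 - ε))) := by
  obtain ⟨hε0, hε1⟩ := hε
  obtain ⟨hc0, hc1⟩ := hc
  set α : ℝ := (1 - ε) / (1 + ε) with hα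
  have hαpos : 0 < α := div_pos (by linarith) (by linarith)
  have hα1 : α < 1 := by
    rw [hα, div_lt_one (by linarith)]; linarith
  have hαinv : (1 + ε) / (1 - ε) = α⁻¹ := by
    rw [hα, inv_div]
  have hApos : ∀ k : ℕ, 0 < c * k * α + ρ ^ (-α) := by
    intro k
    have h1 := Real.rpow_pos_of_pos hρ (-α)
    have h2 : 0 ≤ c * k * α := by positivity
    linarith
  set A : ℕ → ℝ := fun k => c * k * α + ρ ^ (-α) with hA
  have key : ∀ k : ℕ, γ k ≤ (A k) ^ (-α⁻¹) := by
    intro k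
    induction k with
    | zero =>
      have hA0 : A 0 = ρ ^ (-α) := by simp [hA]
      rw [hA0, ← Real.rpow_mul hρ.le,
        show -α * -α⁻¹ = 1 by field_simp, Real.rpow_one]
      exact h0
    | succ k ih =>
      have hRpos : 0 < (A (k+1)) ^ (-α⁻¹) := Real.rpow_pos_of_pos (hApos (k+1)) _
      rcases eq_or_lt_of_le (hnn k) with hz | hz
      · have h1 : γ (k+1) ≤ 0 := by
          have := hrec k
          rw [← hz, Real.zero_rpow (by positivity)] at this
          linarith
        linarith
      · have hx01 : 0 < c * (γ k) ^ α := by positivity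
        have hx1 : c * (γ k) ^ α < 1 := hsmall k
        have hexp : 2 / (1 + ε) = 1 + α := by
          rw [hα]; field_simp; ring
        have hup : γ (k+1) ≤ γ k * (1 - c * (γ k) ^ α) := by
          have := hrec k
          rw [hexp, Real.rpow_add hz, Real.rpow_one] at this
          nlinarith
        rcases le_or_gt (γ (k+1)) 0 with h1 | h1
        · linarith
        · set x : ℝ := c * (γ k) ^ α with hxdef
          have haxpos : 0 < α * x := mul_pos hαpos hx01
          have hax1 : α * x < 1 := by nlinarith
          have hgpos : 0 < γ k * (1 - x) := lt_of_lt_of_le h1 hup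
          have h1x : 0 < 1 - x := by linarith
          have s1 : (γ k * (1 - x)) ^ (-α) ≤ (γ (k+1)) ^ (-α) :=
            Real.rpow_le_rpow_of_nonpos h1 hup (by linarith)
          -- Bernoulli: (1 - x)^α ≤ 1 - α*x
          have hb : (1 - x) ^ α ≤ 1 - α * x := by
            have := rpow_one_add_le_one_add_mul_self (s := -x) (by linarith) hαpos.le hα1.le
            rw [show (1:ℝ) + -x = 1 - x by ring] at this
            linarith [this]
          have hbpos : 0 < (1 - x) ^ α := Real.rpow_pos_of_pos h1x _
          have hinv : 1 + α * x ≤ (1 - x) ^ (-α) := by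
            have h2 : 1 - α * x ≤ 1 / (1 + α * x) :=
              (le_div_iff₀ (by linarith)).mpr (by nlinarith)
            rw [Real.rpow_neg h1x.le, le_inv_comm₀ (by linarith) hbpos]
            calc (1 - x) ^ α ≤ 1 - α * x := hb
              _ ≤ (1 + α * x)⁻¹ := by rw [← one_div]; exact h2
          -- split the product
          have hsplit : (γ k * (1 - x)) ^ (-α) = (γ k) ^ (-α) * (1 - x) ^ (-α) :=
            Real.mul_rpow hz.le h1x.le
          have hgα : 0 < (γ k) ^ (-α) := Real.rpow_pos_of_pos hz _
          have hxcancel : (γ k) ^ (-α) * x = c := by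
            rw [hxdef, mul_comm c, ← mul_assoc, ← Real.rpow_add hz]
            simp
          have hAk : A k ≤ (γ k) ^ (-α) := by
            have h3 := Real.rpow_le_rpow_of_nonpos (z := -α) hz ih
              (neg_nonpos.mpr hαpos.le)
            rwa [← Real.rpow_mul (hApos k).le,
              show -α⁻¹ * -α = 1 by field_simp, Real.rpow_one] at h3
          have hAstep : A (k+1) = A k + c * α := by
            show c * (↑(k+1)) * α + ρ ^ (-α) = c * ↑k * α + ρ ^ (-α) + c * α
            push_cast
            ring
          have hchain : A (k+1) ≤ (γ (k+1)) ^ (-α) := by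
            have h4 : (γ k) ^ (-α) * (1 + α * x) ≤ (γ k * (1 - x)) ^ (-α) := by
              rw [hsplit]
              exact mul_le_mul_of_nonneg_left hinv hgα.le
            have h5 : (γ k) ^ (-α) * (1 + α * x) = (γ k) ^ (-α) + α * c := by
              rw [mul_add, mul_one,
                show (γ k) ^ (-α) * (α * x) = α * ((γ k) ^ (-α) * x) by ring, hxcancel]
            rw [h5] at h4
            rw [hAstep]
            linarith [h4, s1, hAk]
          have h6 := Real.rpow_le_rpow_of_nonpos (z := -α⁻¹) (hApos (k+1)) hchain
            (neg_nonpos.mpr (inv_nonneg.mpr hαpos.le))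
          rwa [← Real.rpow_mul (hnn (k+1)),
            show -α * -α⁻¹ = 1 by field_simp, Real.rpow_one] at h6
  intro k
  rw [hαinv]
  exact key k
end

section
/- Let X, Y be real Hilbert spaces, B ⊆ X convex, F : B → Y Fréchet differentiable with ‖F(x̃) − F(x) − DF(x)(x̃ − x)‖ ≤ (L/2)‖x̃ − x‖² for all x, x̃ ∈ B. Suppose the Hölder stability (1/√2)‖x − x̃‖ ≤ C_F‖F(x) − F(x̃)‖^{(1+ε)/2} holds on B for some ε ∈ (0,1], C_F > 0, and that all x ∈ B satisfy ‖F(x) − F(x̃)‖ ≤ M with L·C_F²·M^ε ≤ c_TC for some c_TC < 1. Then F satisfies the tangential cone condition ‖F(x) − F(x̃) − DF(x)(x − x̃)‖ ≤ c_TC‖F(x) − F(x̃)‖ on B. -/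
theorem holder_stability_implies_tangential_cone {X Y : Type*} [NormedAddCommGroup X]
    [InnerProductSpace ℝ X] [CompleteSpace X] [NormedAddCommGroup Y]
    [InnerProductSpace ℝ Y] [CompleteSpace Y]
    (B : Set X) (hB : Convex ℝ B) (F : X → Y) (DF : X → X →L[ℝ] Y)
    (L CF M ε cTC : ℝ) (hε : ε ∈ Set.Ioc (0:ℝ) 1) (hCF : 0 < CF)
    (hrem : ∀ x ∈ B, ∀ x' ∈ B,
      ‖F x' - F x - DF x (x' - x)‖ ≤ (L / 2) * ‖x' - x‖ ^ 2)
    (hstab : ∀ x ∈ B, ∀ x' ∈ B,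
      (1 / Real.sqrt 2) * ‖x - x'‖ ≤ CF * ‖F x - F x'‖ ^ ((1 + ε) / 2))
    (hM : ∀ x ∈ B, ∀ x' ∈ B, ‖F x - F x'‖ ≤ M)
    (hsmall : L * CF ^ 2 * M ^ ε ≤ cTC) (hcTC : cTC < 1) :
    ∀ x ∈ B, ∀ x' ∈ B,
      ‖F x - F x' - DF x (x - x')‖ ≤ cTC * ‖F x - F x'‖ := by
  intro x hx x' hx'
  by_cases hxx : x = x'
  · subst hxx; simp
  set a := ‖F x - F x'‖ with ha
  have ha0 : 0 ≤ a := norm_nonneg _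
  have hxne : (0:ℝ) < ‖x' - x‖ := by
    rw [norm_pos_iff, sub_ne_zero]; exact fun h => hxx h.symm
  have hL : 0 ≤ L := by
    have h := hrem x hx x' hx'
    have hp : 0 < ‖x' - x‖ ^ 2 := pow_pos hxne 2
    nlinarith [norm_nonneg (F x' - F x - DF x (x' - x))]
  have hs2 : (0:ℝ) < Real.sqrt 2 := by positivity
  have hapos : 0 < a := by
    rcases lt_or_eq_of_le ha0 with h | h
    · exact h
    · exfalso
      have hs := hstab x hx x' hx'
      rw [← ha, ← h, Real.zero_rpow (by have := hε.1; positivity : (1 + ε) / 2 ≠ 0)] at hs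
      have : ‖x - x'‖ ≤ 0 := by
        have h1 : (0:ℝ) < 1 / Real.sqrt 2 := by positivity
        nlinarith [norm_nonneg (x - x')]
      have : x = x' := by
        rw [← sub_eq_zero, ← norm_le_zero_iff]; exact this
      exact hxx this
  -- stability consequence
  have hs := hstab x hx x' hx'
  rw [← ha] at hs
  have hxle : ‖x - x'‖ ≤ Real.sqrt 2 * (CF * a ^ ((1 + ε) / 2)) := by
    have := mul_le_mul_of_nonneg_left hs hs2.le
    calc ‖x - x'‖ = Real.sqrt 2 * ((1 / Real.sqrt 2) * ‖x - x'‖) := by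
          field_simp
      _ ≤ Real.sqrt 2 * (CF * a ^ ((1 + ε) / 2)) := this
  have hrpow : (a ^ ((1 + ε) / 2)) ^ 2 = a ^ (1 + ε) := by
    rw [← Real.rpow_natCast (a ^ ((1 + ε) / 2)) 2, ← Real.rpow_mul ha0]
    norm_num
  have hsq : ‖x - x'‖ ^ 2 ≤ 2 * CF ^ 2 * a ^ (1 + ε) := by
    have h1 : ‖x - x'‖ ^ 2 ≤ (Real.sqrt 2 * (CF * a ^ ((1 + ε) / 2))) ^ 2 :=
      pow_le_pow_left₀ (norm_nonneg _) hxle 2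
    have h2 : (Real.sqrt 2) ^ 2 = 2 := Real.sq_sqrt (by norm_num)
    calc ‖x - x'‖ ^ 2 ≤ (Real.sqrt 2 * (CF * a ^ ((1 + ε) / 2))) ^ 2 := h1
      _ = (Real.sqrt 2) ^ 2 * CF ^ 2 * (a ^ ((1 + ε) / 2)) ^ 2 := by ring
      _ = 2 * CF ^ 2 * a ^ (1 + ε) := by rw [h2, hrpow]
  have hsplit : a ^ (1 + ε) = a * a ^ ε := by
    rw [Real.rpow_add hapos, Real.rpow_one]
  have hεM : a ^ ε ≤ M ^ ε := Real.rpow_le_rpow ha0 (by rw [ha]; exact hM x hx x' hx') hε.1.le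
  have haε : 0 ≤ a ^ ε := Real.rpow_nonneg ha0 ε
  have hgoal : F x - F x' - DF x (x - x') = -(F x' - F x - DF x (x' - x)) := by
    have : DF x (x - x') = DF x x - DF x x' := map_sub _ _ _
    have h2 : DF x (x' - x) = DF x x' - DF x x := map_sub _ _ _
    rw [this, h2]; abel
  rw [hgoal, norm_neg]
  calc ‖F x' - F x - DF x (x' - x)‖ ≤ (L / 2) * ‖x' - x‖ ^ 2 := hrem x hx x' hx'
    _ = (L / 2) * ‖x - x'‖ ^ 2 := by rw [norm_sub_rev]
    _ ≤ (L / 2) * (2 * CF ^ 2 * a ^ (1 + ε)) := by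
        apply mul_le_mul_of_nonneg_left hsq (by linarith)
    _ = (L * CF ^ 2 * a ^ ε) * a := by rw [hsplit]; ring
    _ ≤ cTC * a := by
        apply mul_le_mul_of_nonneg_right _ ha0
        calc L * CF ^ 2 * a ^ ε ≤ L * CF ^ 2 * M ^ ε := by
              apply mul_le_mul_of_nonneg_left hεM (by positivity)
          _ ≤ cTC := hsmall
end

section
/- Let X, Y be Hilbert spaces, F : D(F) ⊆ X → Y Fréchet differentiable, x† a point, α ∈ (0,1], r > 0, and suppose there are constants C > 0 and L > 0 such that ‖DF(x)((x − x†)/‖x − x†‖)‖ ≥ C‖x − x†‖^{1−α} for all x ≠ x† in B_r(x†) ∩ D(F), and ‖F(x̃) − F(x) − DF(x)(x̃ − x)‖ ≤ (L/2)‖x̃ − x‖² for all x, x̃ ∈ D(F). Then for r sufficiently small there exists C_F > 0 such that ‖x − x†‖ ≤ C_F‖F(x) − F(x†)‖^{1/(2−α)} for all x ∈ B_r(x†) ∩ D(F). -/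
theorem lower_bound_implies_holder_stability {X Y : Type*} [NormedAddCommGroup X]
    [InnerProductSpace ℝ X] [CompleteSpace X] [NormedAddCommGroup Y]
    [InnerProductSpace ℝ Y] [CompleteSpace Y]
    (D : Set X) (F : X → Y) (DF : X → X →L[ℝ] Y) (xd : X) (hxd : xd ∈ D)
    (α r C L : ℝ) (hα : α ∈ Set.Ioc (0:ℝ) 1) (hr : 0 < r) (hC : 0 < C) (hL : 0 < L)
    (hlow : ∀ x ∈ Metric.ball xd r ∩ D, x ≠ xd →
      ‖DF x ((‖x - xd‖⁻¹) • (x - xd))‖ ≥ C * ‖x - xd‖ ^ (1 - α))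
    (hrem : ∀ x ∈ D, ∀ x' ∈ D,
      ‖F x' - F x - DF x (x' - x)‖ ≤ (L / 2) * ‖x' - x‖ ^ 2) :
    ∃ r' > 0, r' ≤ r ∧ ∃ CF > 0, ∀ x ∈ Metric.ball xd r' ∩ D,
      ‖x - xd‖ ≤ CF * ‖F x - F xd‖ ^ (1 / (2 - α)) := by
  obtain ⟨hα0, hα1⟩ := hα
  have h2α : (0:ℝ) < 2 - α := by linarith
  have hrpos : 0 < (C/L) ^ (1/α) := Real.rpow_pos_of_pos (div_pos hC hL) _
  refine ⟨min r ((C/L) ^ (1/α)), lt_min hr hrpos, min_le_left _ _,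
    (2/C) ^ (1/(2-α)), Real.rpow_pos_of_pos (by positivity) _, ?_⟩
  rintro x ⟨hxball, hxD⟩
  rcases eq_or_ne x xd with hx | hx
  · subst hx
    simp only [sub_self, norm_zero]
    positivity
  set t := ‖x - xd‖ with ht
  have ht0 : 0 < t := norm_pos_iff.mpr (sub_ne_zero.mpr hx)
  rw [Metric.mem_ball, dist_eq_norm] at hxball
  have htr : t < r := lt_of_lt_of_le hxball (min_le_left _ _)
  have htCL : t ≤ (C/L) ^ (1/α) := le_of_lt (lt_of_lt_of_le hxball (min_le_right _ _))
  -- lower bound on ‖DF x (x - xd)‖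
  have hl := hlow x ⟨Metric.mem_ball.mpr (by rwa [dist_eq_norm]), hxD⟩ hx
  have hsm : ‖DF x ((t⁻¹) • (x - xd))‖ = t⁻¹ * ‖DF x (x - xd)‖ := by
    rw [map_smul, norm_smul, norm_inv, norm_norm]
  rw [hsm] at hl
  have hDF : C * t ^ (2 - α) ≤ ‖DF x (x - xd)‖ := by
    have h1 : C * t ^ (1 - α) * t ≤ t⁻¹ * ‖DF x (x - xd)‖ * t := by
      exact mul_le_mul_of_nonneg_right hl ht0.le
    have h2 : t ^ (1 - α) * t = t ^ (2 - α) := by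
      rw [← Real.rpow_add_one ht0.ne']
      congr 1; ring
    calc C * t ^ (2 - α) = C * t ^ (1 - α) * t := by rw [mul_assoc, h2]
      _ ≤ t⁻¹ * ‖DF x (x - xd)‖ * t := h1
      _ = ‖DF x (x - xd)‖ := by field_simp
  -- remainder bound
  have hR := hrem x hxD xd hxd
  have hRe : ‖F x - F xd - DF x (x - xd)‖ ≤ (L/2) * t ^ 2 := by
    have : F xd - F x - DF x (xd - x) = -(F x - F xd - DF x (x - xd)) := by
      simp only [map_sub]; abel
    rw [this, norm_neg, norm_sub_rev xd x] at hR
    exact hR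
  -- t^α ≤ C/L
  have htα : t ^ α ≤ C / L := by
    have := Real.rpow_le_rpow ht0.le htCL hα0.le
    rwa [← Real.rpow_mul (div_pos hC hL).le, one_div,
      inv_mul_cancel₀ hα0.ne', Real.rpow_one] at this
  -- combine: (L/2) t^2 ≤ (C/2) t^(2-α)
  have ht2 : t ^ (2:ℕ) = t ^ (2 - α) * t ^ α := by
    rw [← Real.rpow_add ht0, ← Real.rpow_natCast]
    norm_num
  have hpow_pos : 0 < t ^ (2 - α) := Real.rpow_pos_of_pos ht0 _
  have hstep : (L/2) * t ^ 2 ≤ (C/2) * t ^ (2 - α) := by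
    rw [ht2]
    calc (L/2) * (t ^ (2-α) * t ^ α) = (L/2) * t ^ α * t ^ (2-α) := by ring
      _ ≤ (L/2) * (C/L) * t ^ (2-α) := by
          apply mul_le_mul_of_nonneg_right _ hpow_pos.le
          exact mul_le_mul_of_nonneg_left htα (by positivity)
      _ = (C/2) * t ^ (2-α) := by field_simp
  -- key estimate
  have hkey : (C/2) * t ^ (2 - α) ≤ ‖F x - F xd‖ := by
    have h1 : ‖DF x (x - xd)‖ - ‖F x - F xd - DF x (x - xd)‖ ≤ ‖F x - F xd‖ := by
      have := norm_sub_norm_le (DF x (x - xd)) (DF x (x - xd) - (F x - F xd))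
      simpa [norm_sub_rev] using this
    nlinarith
  -- invert
  have h1 : t ^ (2 - α) ≤ (2/C) * ‖F x - F xd‖ := by
    rw [div_mul_eq_mul_div, le_div_iff₀ hC]
    nlinarith
  have h2 := Real.rpow_le_rpow hpow_pos.le h1 (le_of_lt (by positivity : (0:ℝ) < 1/(2-α)))
  rwa [← Real.rpow_mul ht0.le,
    mul_one_div_cancel h2α.ne', Real.rpow_one,
    Real.mul_rpow (by positivity) (norm_nonneg _)] at h2
end

section
/- Under the hypotheses of the Hilbert-space Landweber convergence theorem with critical index ε = 0 (i.e., stability (1/√2)‖x − x̃‖ ≤ C_F‖F(x) − F(x̃)‖^{1/2}), if the stepsize μ and stability constant satisfy μL̂² + 2L·C_F² < 2, and c = (μ/4)(2 − μL̂² − 2L·C_F²)·C_F^{−4} > 0, then γ_k := (1/2)‖x_k − x†‖² satisfies γ_{k+1} ≤ γ_k − c·γ_k², and hence γ_k ≤ (γ_0^{−1} + c·k)^{−1} and x_k → x†. -/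
/-! With `u = x_k - x†`, `r = F x_k - y` and `A = DF x_k`, the stability estimate with exponent
`1/2` gives `‖u‖² ≤ 2 C_F² ‖r‖`, which turns the quadratic Taylor remainder into the tangential
cone condition `‖A u - r‖ ≤ L C_F² ‖r‖`. Expanding `‖u - μ A* r‖²` then shows
`‖x_{k+1} - x†‖² ≤ ‖u‖² - μ (2 - μ L̂² - 2 L C_F²) ‖r‖²`, and bounding `‖r‖` below by stability once
more gives `γ_{k+1} ≤ γ_k - c γ_k²`. Such a recursion forces `1/γ_{k+1} ≥ 1/γ_k + c`, whence the
rate `γ_k ≤ (1/γ_0 + c k)⁻¹` and the convergence. -/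

open Filter Topology RealInnerProductSpace

theorem sq_le_two_mul_sq_mul_of_le_mul_rpow_half {s t C : ℝ} (hs : 0 ≤ s) (ht : 0 ≤ t)
    (h : 1 / √2 * s ≤ C * t ^ ((1 : ℝ) / 2)) : s ^ 2 ≤ 2 * C ^ 2 * t := by
  rw [← Real.sqrt_eq_rpow] at h
  have hsq := pow_le_pow_left₀ (by positivity) h 2
  rw [mul_pow, mul_pow, div_pow, Real.sq_sqrt (by norm_num), Real.sq_sqrt ht] at hsq
  linarith

theorem inv_add_le_inv_of_le_sub_mul_sq {s t c : ℝ} (hc : 0 ≤ c) (hs : 0 < s)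
    (h : s ≤ t - c * t ^ 2) : t⁻¹ + c ≤ s⁻¹ := by
  have ht : 0 < t := by nlinarith [sq_nonneg t]
  have hpos : 0 < t - c * t ^ 2 := hs.trans_le h
  calc t⁻¹ + c ≤ (t - c * t ^ 2)⁻¹ := by
        rw [inv_eq_one_div (t - _), le_div_iff₀ hpos]
        have : (t⁻¹ + c) * (t - c * t ^ 2) = 1 - (c * t) ^ 2 := by field_simp; ring
        nlinarith [sq_nonneg (c * t)]
    _ ≤ s⁻¹ := inv_anti₀ hs h

theorem le_inv_add_mul_of_le_sub_mul_sq {γ : ℕ → ℝ} {c : ℝ} (hc : 0 ≤ c)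
    (hγ : ∀ k, 0 ≤ γ k) (h : ∀ k, γ (k + 1) ≤ γ k - c * γ k ^ 2) (k : ℕ) :
    γ k ≤ ((γ 0)⁻¹ + c * k)⁻¹ := by
  induction k with
  | zero => simp
  | succ k ih =>
    rcases (hγ (k + 1)).eq_or_lt with hzero | hpos
    · rw [← hzero]; have := hγ 0; positivity
    have hk : 0 < γ k := hpos.trans_le ((h k).trans (by nlinarith [sq_nonneg (γ k)]))
    have hrhs : 0 < (γ 0)⁻¹ + c * k := inv_pos.mp (hk.trans_le ih)
    have hinv : (γ 0)⁻¹ + c * k ≤ (γ k)⁻¹ := (le_inv_comm₀ hk hrhs).mp ih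
    have hstep := inv_add_le_inv_of_le_sub_mul_sq hc hpos (h k)
    rw [le_inv_comm₀ hpos (by push_cast; linarith)]
    push_cast; linarith

theorem tendsto_inv_add_mul_natCast_atTop_nhds_zero (a : ℝ) {c : ℝ} (hc : 0 < c) :
    Tendsto (fun k : ℕ => (a + c * k)⁻¹) atTop (𝓝 0) :=
  (tendsto_atTop_add_const_left _ a
    ((tendsto_natCast_atTop_atTop (R := ℝ)).const_mul_atTop hc)).inv_tendsto_atTop

theorem tendsto_of_norm_sub_sq_tendsto_zero {X : Type*} [SeminormedAddCommGroup X]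
    {x : ℕ → X} {a : X} (h : Tendsto (fun k => ‖x k - a‖ ^ 2) atTop (𝓝 0)) :
    Tendsto x atTop (𝓝 a) := by
  rw [tendsto_iff_norm_sub_tendsto_zero]
  simpa [Real.sqrt_sq (norm_nonneg _)] using h.sqrt

section Landweber

variable {X Y : Type*} [NormedAddCommGroup X] [InnerProductSpace ℝ X] [CompleteSpace X]
  [NormedAddCommGroup Y] [InnerProductSpace ℝ Y] [CompleteSpace Y]

theorem norm_sub_smul_adjoint_sq_le (A : X →L[ℝ] Y) (u : X) (r : Y) {μ Lhat η : ℝ}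
    (hμ : 0 ≤ μ) (hA : ‖A‖ ≤ Lhat) (hcone : ‖A u - r‖ ≤ η * ‖r‖) :
    ‖u - μ • ContinuousLinearMap.adjoint A r‖ ^ 2
      ≤ ‖u‖ ^ 2 - μ * (2 - μ * Lhat ^ 2 - 2 * η) * ‖r‖ ^ 2 := by
  have hinner : (1 - η) * ‖r‖ ^ 2 ≤ ⟪u, ContinuousLinearMap.adjoint A r⟫ := by
    rw [ContinuousLinearMap.adjoint_inner_right]
    have : ⟪A u, r⟫ = ‖r‖ ^ 2 + ⟪A u - r, r⟫ := by
      rw [inner_sub_left, real_inner_self_eq_norm_sq]; ring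
    have hcs := neg_le_of_abs_le (abs_real_inner_le_norm (A u - r) r)
    nlinarith [mul_le_mul_of_nonneg_right hcone (norm_nonneg r)]
  have hadj : ‖ContinuousLinearMap.adjoint A r‖ ^ 2 ≤ Lhat ^ 2 * ‖r‖ ^ 2 := by
    rw [← mul_pow]
    gcongr
    calc ‖ContinuousLinearMap.adjoint A r‖ ≤ ‖A‖ * ‖r‖ := by
          simpa only [LinearIsometryEquiv.norm_map] using
            (ContinuousLinearMap.adjoint A).le_opNorm r
      _ ≤ Lhat * ‖r‖ := by gcongr
  rw [norm_sub_sq_real, real_inner_smul_right, norm_smul, mul_pow, Real.norm_eq_abs, sq_abs]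
  nlinarith [mul_le_mul_of_nonneg_left hinner hμ, mul_le_mul_of_nonneg_left hadj (sq_nonneg μ)]

theorem landweber_step_sq_error_le (F : X → Y) (DF : X →L[ℝ] Y) {x xd : X}
    {L Lhat CF μ : ℝ} (hL : 0 ≤ L) (hμ : 0 ≤ μ) (hDF : ‖DF‖ ≤ Lhat)
    (hrem : ‖F xd - F x - DF (xd - x)‖ ≤ L / 2 * ‖xd - x‖ ^ 2)
    (hstab : 1 / √2 * ‖x - xd‖ ≤ CF * ‖F x - F xd‖ ^ ((1 : ℝ) / 2)) :
    ‖x - μ • ContinuousLinearMap.adjoint DF (F x - F xd) - xd‖ ^ 2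
      ≤ ‖x - xd‖ ^ 2 - μ * (2 - μ * Lhat ^ 2 - 2 * L * CF ^ 2) * ‖F x - F xd‖ ^ 2 := by
  have hstab_sq := sq_le_two_mul_sq_mul_of_le_mul_rpow_half (norm_nonneg _) (norm_nonneg _) hstab
  have hcone : ‖DF (x - xd) - (F x - F xd)‖ ≤ L * CF ^ 2 * ‖F x - F xd‖ :=
    calc ‖DF (x - xd) - (F x - F xd)‖ = ‖F xd - F x - DF (xd - x)‖ := by
          rw [map_sub, map_sub]; congr 1; abel
      _ ≤ L / 2 * ‖x - xd‖ ^ 2 := by rwa [norm_sub_rev xd x] at hrem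
      _ ≤ L / 2 * (2 * CF ^ 2 * ‖F x - F xd‖) := by gcongr
      _ = L * CF ^ 2 * ‖F x - F xd‖ := by ring
  rw [sub_right_comm]
  exact (norm_sub_smul_adjoint_sq_le _ _ _ hμ hDF hcone).trans_eq (by ring)

theorem landweber_step_half_sq_error_le (F : X → Y) (DF : X →L[ℝ] Y) {x xd : X}
    {L Lhat CF μ : ℝ} (hL : 0 ≤ L) (hμ : 0 ≤ μ) (hCF : CF ≠ 0)
    (hD : 0 ≤ 2 - μ * Lhat ^ 2 - 2 * L * CF ^ 2) (hDF : ‖DF‖ ≤ Lhat)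
    (hrem : ‖F xd - F x - DF (xd - x)‖ ≤ L / 2 * ‖xd - x‖ ^ 2)
    (hstab : 1 / √2 * ‖x - xd‖ ≤ CF * ‖F x - F xd‖ ^ ((1 : ℝ) / 2)) :
    1 / 2 * ‖x - μ • ContinuousLinearMap.adjoint DF (F x - F xd) - xd‖ ^ 2
      ≤ 1 / 2 * ‖x - xd‖ ^ 2 - μ / 4 * (2 - μ * Lhat ^ 2 - 2 * L * CF ^ 2) * CF ^ (-4 : ℤ)
          * (1 / 2 * ‖x - xd‖ ^ 2) ^ 2 := by
  have hdesc := landweber_step_sq_error_le F DF hL hμ hDF hrem hstab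
  have hstab_sq := sq_le_two_mul_sq_mul_of_le_mul_rpow_half (norm_nonneg _) (norm_nonneg _) hstab
  set D := 2 - μ * Lhat ^ 2 - 2 * L * CF ^ 2
  set e := ‖x - xd‖ ^ 2
  set R := ‖F x - F xd‖
  have hc : 0 ≤ μ / 4 * D * CF ^ (-4 : ℤ) := by positivity
  have hquad : μ / 4 * D * CF ^ (-4 : ℤ) * e ^ 2 ≤ μ * D * R ^ 2 :=
    calc μ / 4 * D * CF ^ (-4 : ℤ) * e ^ 2
        ≤ μ / 4 * D * CF ^ (-4 : ℤ) * (2 * CF ^ 2 * R) ^ 2 := by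
          gcongr
      _ = μ * D * R ^ 2 := by
          rw [zpow_neg]; norm_cast; field_simp; ring
  nlinarith [mul_nonneg hc (sq_nonneg e)]

end Landweber

theorem landweber_convergence_critical_index_general {X Y : Type*} [NormedAddCommGroup X]
    [InnerProductSpace ℝ X] [CompleteSpace X] [NormedAddCommGroup Y]
    [InnerProductSpace ℝ Y] [CompleteSpace Y]
    (B : Set X) (F : X → Y) (DF : X → X →L[ℝ] Y) (y : Y) (xd : X)
    (L Lhat CF μ : ℝ) (hL : 0 < L) (hCF : 0 < CF)
    (hxd : xd ∈ B) (hy : F xd = y)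
    (hDFb : ∀ x ∈ B, ‖DF x‖ ≤ Lhat)
    (hrem : ∀ x ∈ B, ∀ x' ∈ B,
      ‖F x' - F x - DF x (x' - x)‖ ≤ (L / 2) * ‖x' - x‖ ^ 2)
    (hstab : ∀ x ∈ B, ∀ x' ∈ B,
      (1 / Real.sqrt 2) * ‖x - x'‖ ≤ CF * ‖F x - F x'‖ ^ ((1:ℝ) / 2))
    (hμ0 : 0 < μ) (hμ : μ * Lhat ^ 2 + 2 * L * CF ^ 2 < 2)
    (c : ℝ) (hc : c = (μ / 4) * (2 - μ * Lhat ^ 2 - 2 * L * CF ^ 2) * CF ^ (-4 : ℤ))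
    (x : ℕ → X)
    (hiter : ∀ k, x (k + 1) =
      x k - μ • (ContinuousLinearMap.adjoint (DF (x k))) (F (x k) - y))
    (hxB : ∀ k, x k ∈ B)
    (γ : ℕ → ℝ) (hγ : ∀ k, γ k = (1 / 2) * ‖x k - xd‖ ^ 2) :
    (∀ k, γ (k + 1) ≤ γ k - c * (γ k) ^ 2) ∧
      (∀ k : ℕ, γ k ≤ ((γ 0)⁻¹ + c * k)⁻¹) ∧
      Filter.Tendsto x Filter.atTop (nhds xd) := by
  subst hy
  have hD : 0 < 2 - μ * Lhat ^ 2 - 2 * L * CF ^ 2 := by linarith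
  have hc_pos : 0 < c := by rw [hc]; positivity
  have hγ_nonneg : ∀ k, 0 ≤ γ k := fun k => by rw [hγ k]; positivity
  have hdesc : ∀ k, γ (k + 1) ≤ γ k - c * γ k ^ 2 := fun k => by
    rw [hγ, hγ, hiter, hc]
    exact landweber_step_half_sq_error_le F (DF (x k)) hL.le hμ0.le hCF.ne' hD.le
      (hDFb _ (hxB k)) (hrem _ (hxB k) _ hxd) (hstab _ (hxB k) _ hxd)
  have hbound := le_inv_add_mul_of_le_sub_mul_sq hc_pos.le hγ_nonneg hdesc
  refine ⟨hdesc, hbound, tendsto_of_norm_sub_sq_tendsto_zero ?_⟩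
  have hγ_lim := squeeze_zero hγ_nonneg hbound
    (tendsto_inv_add_mul_natCast_atTop_nhds_zero _ hc_pos)
  simpa [hγ, ← mul_assoc] using hγ_lim.const_mul 2

theorem landweber_convergence_critical_index {X Y : Type*} [NormedAddCommGroup X]
    [InnerProductSpace ℝ X] [CompleteSpace X] [NormedAddCommGroup Y]
    [InnerProductSpace ℝ Y] [CompleteSpace Y]
    (B : Set X) (F : X → Y) (DF : X → X →L[ℝ] Y) (y : Y) (xd : X)
    (L Lhat CF μ : ℝ) (hL : 0 < L) (hLhat : 0 < Lhat) (hCF : 0 < CF)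
    (hxd : xd ∈ B) (hy : F xd = y)
    (hDFb : ∀ x ∈ B, ‖DF x‖ ≤ Lhat)
    (hrem : ∀ x ∈ B, ∀ x' ∈ B,
      ‖F x' - F x - DF x (x' - x)‖ ≤ (L / 2) * ‖x' - x‖ ^ 2)
    (hstab : ∀ x ∈ B, ∀ x' ∈ B,
      (1 / Real.sqrt 2) * ‖x - x'‖ ≤ CF * ‖F x - F x'‖ ^ ((1:ℝ) / 2))
    (hμ0 : 0 < μ) (hμ : μ * Lhat ^ 2 + 2 * L * CF ^ 2 < 2)
    (c : ℝ) (hc : c = (μ / 4) * (2 - μ * Lhat ^ 2 - 2 * L * CF ^ 2) * CF ^ (-4 : ℤ))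
    (x : ℕ → X)
    (hiter : ∀ k, x (k + 1) =
      x k - μ • (ContinuousLinearMap.adjoint (DF (x k))) (F (x k) - y))
    (hxB : ∀ k, x k ∈ B)
    (γ : ℕ → ℝ) (hγ : ∀ k, γ k = (1 / 2) * ‖x k - xd‖ ^ 2) :
    (∀ k, γ (k + 1) ≤ γ k - c * (γ k) ^ 2) ∧
      (∀ k : ℕ, γ k ≤ ((γ 0)⁻¹ + c * k)⁻¹) ∧
      Filter.Tendsto x Filter.atTop (nhds xd) :=
  landweber_convergence_critical_index_general B F DF y xd L Lhat CF μ hL hCF hxd hy hDFb hrem hstab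
    hμ0 hμ c hc x hiter hxB γ hγ
end

section
/- Let ε ∈ (0,1), c ∈ (0,1), and suppose γ, γ' ≥ 0 satisfy γ' ≤ γ − c·γ^{2/(1+ε)} with c·γ^{(1−ε)/(1+ε)} < 1 and γ > 0, γ' > 0. Then γ'^{−(1−ε)/(1+ε)} ≥ γ^{−(1−ε)/(1+ε)} + c·(1−ε)/(1+ε). -/
theorem one_step_telescoping (ε c γ γ' : ℝ) (hε : ε ∈ Set.Ioo (0:ℝ) 1)
    (hc : c ∈ Set.Ioo (0:ℝ) 1) (hγ : 0 < γ) (hγ' : 0 < γ')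
    (hsmall : c * γ ^ ((1 - ε) / (1 + ε)) < 1)
    (hrec : γ' ≤ γ - c * γ ^ (2 / (1 + ε))) :
    γ' ^ (-((1 - ε) / (1 + ε))) ≥ γ ^ (-((1 - ε) / (1 + ε))) + c * ((1 - ε) / (1 + ε)) := by
  obtain ⟨hε0, hε1⟩ := hε
  obtain ⟨hc0, hc1⟩ := hc
  set β : ℝ := (1 - ε) / (1 + ε) with hβ
  have h1ε : (0:ℝ) < 1 + ε := by linarith
  have hβ0 : 0 < β := div_pos (by linarith) h1ε
  have hβ1 : β < 1 := by
    rw [hβ, div_lt_one h1ε]; linarith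
  set x : ℝ := c * γ ^ β with hx
  have hx0 : 0 < x := mul_pos hc0 (Real.rpow_pos_of_pos hγ β)
  have hx1 : x < 1 := hsmall
  have hexp : 2 / (1 + ε) = 1 + β := by
    rw [hβ]; field_simp; ring
  have hfac : γ - c * γ ^ (2 / (1 + ε)) = γ * (1 - x) := by
    rw [hexp, Real.rpow_add hγ, Real.rpow_one, hx]; ring
  have hrec' : γ' ≤ γ * (1 - x) := by rw [← hfac]; exact hrec
  -- antitone step
  have step1 : (γ * (1 - x)) ^ (-β) ≤ γ' ^ (-β) :=
    Real.rpow_le_rpow_of_nonpos hγ' hrec' (by linarith)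
  have hmul : (γ * (1 - x)) ^ (-β) = γ ^ (-β) * (1 - x) ^ (-β) :=
    Real.mul_rpow hγ.le (by linarith)
  -- Bernoulli: (1 - x) ^ β ≤ 1 - β * x
  have hbern : (1 - x) ^ β ≤ 1 - β * x := by
    have := rpow_one_add_le_one_add_mul_self (s := -x) (by linarith) hβ0.le hβ1.le
    simpa [mul_neg, sub_eq_add_neg] using this
  have h1x : (0:ℝ) < 1 - x := by linarith
  have hβx1 : β * x < 1 := by
    have : β * x < 1 * 1 := mul_lt_mul'' hβ1 hx1 hβ0.le hx0.le
    linarith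
  have hβx0 : 0 < 1 - β * x := by linarith
  -- (1-x)^(-β) ≥ 1 + β x
  have hB : 1 - β * x ≤ (1 + β * x)⁻¹ := by
    rw [inv_eq_one_div, le_div_iff₀ (by positivity)]
    nlinarith [sq_nonneg (β * x)]
  have hA : (1 - x) ^ β ≤ (1 + β * x)⁻¹ := hbern.trans hB
  have key : 1 + β * x ≤ (1 - x) ^ (-β) := by
    rw [Real.rpow_neg h1x.le]
    have h := inv_anti₀ (Real.rpow_pos_of_pos h1x β) hA
    simpa using h
  have hγβ : γ ^ (-β) * γ ^ β = 1 := by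
    rw [← Real.rpow_add hγ]; simp
  have heq : γ ^ (-β) + c * β = γ ^ (-β) * (1 + β * x) := by
    rw [hx]; linear_combination (-(β * c)) * hγβ
  calc γ ^ (-β) + c * β = γ ^ (-β) * (1 + β * x) := heq
    _ ≤ γ ^ (-β) * (1 - x) ^ (-β) := by
        exact mul_le_mul_of_nonneg_left key (Real.rpow_pos_of_pos hγ _).le
    _ = (γ * (1 - x)) ^ (-β) := hmul.symm
    _ ≤ γ' ^ (-β) := step1
end
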